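/- Let D ⊂ ℝⁿ be a bounded convex domain with R = max_{p ∈ D} r(p). For every r ∈ [0, R], the set D_r = {p ∈ D : r(p) > r} is convex. -/

import Mathlib

/-!
For a direction `v ≠ 0`, the slice `S_p = {t | p + t • v ∈ D}` of a bounded convex `D` is a
bounded interval of length `segLen D p v`. Convexity of `D` gives
`a • S_x + b • S_y ⊆ S_(a • x + b • y)`, and the length of intervals is additive under Minkowski
sums, so `p ↦ segLen D p v` is concave on `D`. Hence so is the infimum `inacc D`, and its strict
superlevel sets are convex.
-/

open scoped RealInnerProductSpace
open Metric MeasureTheory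

/-- For a point `p` and a unit vector `v`, the length of the connected component of
`(p + ℝ v) ∩ D` containing `p`, computed as the Lebesgue measure of the corresponding
set of parameters `t` (its connected component containing `0`). -/
noncomputable def segLen {n : ℕ} (D : Set (EuclideanSpace ℝ (Fin n)))
    (p v : EuclideanSpace ℝ (Fin n)) : ℝ :=
  (volume (connectedComponentIn {t : ℝ | p + t • v ∈ D} 0)).toReal

/-- Inaccessibility of `p` in `D`: the infimum (a minimum, by lower semicontinuity)
of `f_p` over the unit sphere. -/
noncomputable def inacc {n : ℕ} (D : Set (EuclideanSpace ℝ (Fin n)))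
    (p : EuclideanSpace ℝ (Fin n)) : ℝ :=
  sInf (segLen D p '' sphere (0 : EuclideanSpace ℝ (Fin n)) 1)

/-- The inaccessibility `R` of `D`: the supremum (for convex `D`, the maximum) of the
inaccessibility function on `D`. -/
noncomputable def Rmax {n : ℕ} (D : Set (EuclideanSpace ℝ (Fin n))) : ℝ :=
  sSup (inacc D '' D)

open Set Bornology
open scoped Pointwise

namespace Real

theorem volume_eq_ediam_of_isPreconnected {s : Set ℝ} (hs : IsPreconnected s)
    (hb : IsBounded s) : volume s = ediam s := by
  refine le_antisymm (volume_le_diam s) ?_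
  rcases s.eq_empty_or_nonempty with rfl | hne
  · simp
  rw [ediam_eq hb, ← volume_Ioo]
  exact measure_mono (IsConnected.Ioo_csInf_csSup_subset ⟨hne, hs⟩ hb.bddBelow hb.bddAbove)

theorem diam_add {s t : Set ℝ} (hs : IsBounded s) (ht : IsBounded t) (hs₀ : s.Nonempty)
    (ht₀ : t.Nonempty) : diam (s + t) = diam s + diam t := by
  rw [diam_eq hs, diam_eq ht, diam_eq (hs.add ht), csSup_add hs₀ hs.bddAbove ht₀ ht.bddAbove,
    csInf_add hs₀ hs.bddBelow ht₀ ht.bddBelow]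
  ring

end Real

section LineSlice

variable {E : Type*} [NormedAddCommGroup E] [NormedSpace ℝ E] {D : Set E}

theorem Convex.setOf_add_smul_mem (hD : Convex ℝ D) (p v : E) :
    Convex ℝ {t : ℝ | p + t • v ∈ D} := by
  intro s hs t ht a b ha hb hab
  show p + (a • s + b • t) • v ∈ D
  convert hD hs ht ha hb hab using 1
  calc p + (a • s + b • t) • v = (a + b) • p + (a • s + b • t) • v := by rw [hab, one_smul]
    _ = a • (p + s • v) + b • (p + t • v) := by module

theorem Bornology.IsBounded.setOf_add_smul_mem (hD : IsBounded D) (p : E) {v : E} (hv : v ≠ 0) :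
    IsBounded {t : ℝ | p + t • v ∈ D} := by
  obtain ⟨C, hC⟩ := isBounded_iff_forall_norm_le.1 hD
  refine isBounded_iff_forall_norm_le.2 ⟨(C + ‖p‖) / ‖v‖, fun t ht => ?_⟩
  rw [le_div_iff₀ (norm_pos_iff.2 hv), ← norm_smul]
  calc ‖t • v‖ = ‖(p + t • v) - p‖ := by rw [add_sub_cancel_left]
    _ ≤ ‖p + t • v‖ + ‖p‖ := norm_sub_le _ _
    _ ≤ C + ‖p‖ := by gcongr; exact hC _ ht

theorem Convex.smul_setOf_add_smul_mem_add_subset (hD : Convex ℝ D) {x y : E} (v : E)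
    {a b : ℝ} (ha : 0 ≤ a) (hb : 0 ≤ b) (hab : a + b = 1) :
    a • {t : ℝ | x + t • v ∈ D} + b • {t : ℝ | y + t • v ∈ D} ⊆
      {t : ℝ | (a • x + b • y) + t • v ∈ D} := by
  rintro _ ⟨_, ⟨s, hs, rfl⟩, _, ⟨t, ht, rfl⟩, rfl⟩
  show (a • x + b • y) + (a • s + b • t) • v ∈ D
  convert hD hs ht ha hb hab using 1
  module

end LineSlice

section Inaccessibility

variable {n : ℕ} {D : Set (EuclideanSpace ℝ (Fin n))}

theorem segLen_eq_diam (hBdd : IsBounded D) (hConv : Convex ℝ D) {p v : EuclideanSpace ℝ (Fin n)}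
    (hv : v ≠ 0) (hp : p ∈ D) : segLen D p v = diam {t : ℝ | p + t • v ∈ D} := by
  have hpre := (hConv.setOf_add_smul_mem p v).isPreconnected
  rw [segLen, hpre.connectedComponentIn (by simpa using hp),
    Real.volume_eq_ediam_of_isPreconnected hpre (hBdd.setOf_add_smul_mem p hv)]
  rfl

theorem concaveOn_segLen (hBdd : IsBounded D) (hConv : Convex ℝ D)
    {v : EuclideanSpace ℝ (Fin n)} (hv : v ≠ 0) : ConcaveOn ℝ D (segLen D · v) := by
  refine ⟨hConv, fun x hx y hy a b ha hb hab => ?_⟩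
  have hz := hConv hx hy ha hb hab
  have hbdd := fun p => hBdd.setOf_add_smul_mem p hv
  have hne : ∀ p ∈ D, {t : ℝ | p + t • v ∈ D}.Nonempty := fun p hp => ⟨0, by simpa using hp⟩
  simp only [segLen_eq_diam hBdd hConv hv hx, segLen_eq_diam hBdd hConv hv hy,
    segLen_eq_diam hBdd hConv hv hz, smul_eq_mul]
  calc a * diam {t : ℝ | x + t • v ∈ D} + b * diam {t : ℝ | y + t • v ∈ D}
      = diam (a • {t : ℝ | x + t • v ∈ D} + b • {t : ℝ | y + t • v ∈ D}) := by
        rw [Real.diam_add ((hbdd x).smul₀ a) ((hbdd y).smul₀ b) ((hne x hx).smul_set)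
          ((hne y hy).smul_set), diam_smul₀, diam_smul₀, Real.norm_of_nonneg ha,
          Real.norm_of_nonneg hb]
    _ ≤ diam {t : ℝ | (a • x + b • y) + t • v ∈ D} :=
        diam_mono (hConv.smul_setOf_add_smul_mem_add_subset v ha hb hab) (hbdd _)

theorem inacc_le_segLen (D : Set (EuclideanSpace ℝ (Fin n))) (p : EuclideanSpace ℝ (Fin n))
    {v : EuclideanSpace ℝ (Fin n)} (hv : v ∈ sphere 0 1) : inacc D p ≤ segLen D p v :=
  csInf_le ⟨0, by rintro _ ⟨w, -, rfl⟩; exact ENNReal.toReal_nonneg⟩ ⟨v, hv, rfl⟩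

theorem concaveOn_inacc (hBdd : IsBounded D) (hConv : Convex ℝ D) : ConcaveOn ℝ D (inacc D) := by
  refine ⟨hConv, fun x hx y hy a b ha hb hab => ?_⟩
  rcases (sphere (0 : EuclideanSpace ℝ (Fin n)) 1).eq_empty_or_nonempty with hS | hS
  · simp [inacc, hS]
  refine le_csInf (hS.image _) ?_
  rintro _ ⟨v, hv, rfl⟩
  calc a • inacc D x + b • inacc D y ≤ a • segLen D x v + b • segLen D y v := by
        gcongr <;> exact inacc_le_segLen D _ hv
    _ ≤ segLen D (a • x + b • y) v :=
        (concaveOn_segLen hBdd hConv (ne_zero_of_mem_unit_sphere ⟨v, hv⟩)).2 hx hy ha hb hab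

end Inaccessibility

theorem Dset_convex_general {n : ℕ} (D : Set (EuclideanSpace ℝ (Fin n)))
    (hBdd : Bornology.IsBounded D)
    (hConv : Convex ℝ D) :
    ∀ r ∈ Set.Icc (0 : ℝ) (Rmax D), Convex ℝ {p | p ∈ D ∧ r < inacc D p} :=
  fun r _ => (concaveOn_inacc hBdd hConv).convex_gt r

/-- for a bounded convex domain `D ⊂ ℝⁿ` with `R = max r`, the set
`D_r = {p ∈ D | r(p) > r}` is convex for every `r ∈ [0, R]`. -/
theorem Dset_convex {n : ℕ} (D : Set (EuclideanSpace ℝ (Fin n)))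
    (hOpen : IsOpen D) (hNe : D.Nonempty) (hBdd : Bornology.IsBounded D)
    (hConv : Convex ℝ D) :
    ∀ r ∈ Set.Icc (0 : ℝ) (Rmax D), Convex ℝ {p | p ∈ D ∧ r < inacc D p} :=
  Dset_convex_general D hBdd hConv
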